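/- Let M be a smooth d-dimensional manifold and n ≥ 2. The open sets C_{I₁I₂}, where (I₁, I₂) runs over the nontrivial partitions {1,…,n} = I₁ ⊔ I₂, cover M^n \ d_n, and there exists a partition of unity {χ_{I₁I₂}} subordinated to this cover such that every function χ_{I₁I₂} is tempered along the small diagonal d_n. -/

import Mathlib

open Filter Topology MeasureTheory Metric Set

noncomputable section

/-- `d`-dimensional Euclidean space. -/
abbrev Euc (d : ℕ) := EuclideanSpace ℝ (Fin d)

/-- The configuration space `M^n` of `n` points of `M = ℝ^d`. -/
abbrev Conf (d n : ℕ) := Fin n → Euc d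

variable {d n : ℕ}

/-- A function on a normed space is tempered along a closed set `X`: it is smooth off
`X`, and for every `k ∈ ℕ` and compact `K` there are `C, s > 0` with
`sup_{|ν|≤k}|∂^ν f(x)| ≤ C[1 + dist(x,X)^{−s}]` for all `x ∈ K \ X`. -/
def TemperedAlong {V : Type*} [NormedAddCommGroup V] [NormedSpace ℝ V]
    (X : Set V) (f : V → ℂ) : Prop :=
  ContDiffOn ℝ (⊤ : ℕ∞) f Xᶜ ∧
  ∀ (k : ℕ) (K : Set V), IsCompact K →
    ∃ C s : ℝ, 0 < C ∧ 0 < s ∧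
      ∀ x ∈ K \ X, ∀ j : ℕ, j ≤ k →
        ‖iteratedFDeriv ℝ j f x‖ ≤ C * (1 + Metric.infDist x X ^ (-s))

/-- The small diagonal `d_n = {(x,…,x)} ⊆ M^n`. -/
def smallDiag (d n : ℕ) : Set (Conf d n) := {x : Conf d n | ∀ i j : Fin n, x i = x j}

/-- A pair `(I₁, I₂)` is a nontrivial partition of `{1,…,n}`: both parts nonempty,
disjoint, with union everything. -/
def IsNontrivPart (p : Finset (Fin n) × Finset (Fin n)) : Prop :=
  p.1.Nonempty ∧ p.2.Nonempty ∧ Disjoint p.1 p.2 ∧ p.1 ∪ p.2 = Finset.univ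

/-- The open set `C_{I₁I₂} = {x : x_i ≠ x_j for all (i,j) ∈ I₁ × I₂}`. -/
def Cpart (p : Finset (Fin n) × Finset (Fin n)) : Set (Conf d n) :=
  {x : Conf d n | ∀ i ∈ p.1, ∀ j ∈ p.2, x i ≠ x j}

/-!
Off the diagonal put `D = ∑ᵢⱼ ‖xᵢ - xⱼ‖²`. For a partition `(I₁, I₂)` the scale-invariant
product `∏_{i ∈ I₁, j ∈ I₂} n⁴ ‖xᵢ - xⱼ‖² / D` vanishes outside `C_{I₁I₂}`, and at each point
off the diagonal it is `≥ 1` for some partition: take a farthest pair, at distance `t`, order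
the points by their distance to one end of it, and cut at a gap of width `t / n`, which exists
by pigeonhole. Smooth cutoffs of these products, equal to `1` where the product is `≥ 1` and to
`0` where it is `≤ 1/2`, have sum `≥ 1`; dividing by the sum gives the partition of unity.

Temperedness comes from a class of functions whose derivatives are bounded on compact sets by
powers of `1 + dist(x, d_n)⁻¹`: it contains the smooth functions and `1 / D`
(as `D ≥ dist(x, d_n)²`), and is stable under sums, products, composition with smooth functions
with bounded derivatives, and inversion of functions whose reciprocal is bounded by a power of
the weight.
-/

open scoped ContDiff Nat

lemma le_abs_mul_pow_of_le {a C v : ℝ} {s S : ℕ} (h : a ≤ C * v ^ s) (hv : 1 ≤ v)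
    (hs : s ≤ S) : a ≤ |C| * v ^ S :=
  h.trans (mul_le_mul (le_abs_self C) (pow_le_pow_right₀ hv hs) (by positivity) (abs_nonneg C))

lemma exists_bound_forall_le_of_forall {α : Type*} {w : α → ℝ} {S : Set α} {a : ℕ → α → ℝ}
    (hw : ∀ x, 1 ≤ w x) (h : ∀ i, ∃ (C : ℝ) (s : ℕ), ∀ x ∈ S, a i x ≤ C * w x ^ s) (k : ℕ) :
    ∃ (C : ℝ) (s : ℕ), 0 ≤ C ∧ ∀ x ∈ S, ∀ i ≤ k, a i x ≤ C * w x ^ s := by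
  choose C s hC using h
  refine ⟨∑ i ∈ Finset.range (k + 1), |C i|, ∑ i ∈ Finset.range (k + 1), s i,
    Finset.sum_nonneg fun i _ => abs_nonneg _, fun x hx i hi => ?_⟩
  have hi : i ∈ Finset.range (k + 1) := Finset.mem_range.2 (Nat.lt_succ_of_le hi)
  refine (le_abs_mul_pow_of_le (hC i x hx) (hw x)
    (Finset.single_le_sum (fun j _ => Nat.zero_le (s j)) hi)).trans ?_
  exact mul_le_mul_of_nonneg_right
    (Finset.single_le_sum (f := fun j => |C j|) (fun j _ => abs_nonneg _) hi)
    (pow_nonneg (zero_le_one.trans (hw x)) _)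

lemma norm_iteratedFDeriv_inv (i : ℕ) (y : ℝ) :
    ‖iteratedFDeriv ℝ i Inv.inv y‖ = i ! * |y|⁻¹ ^ (i + 1) := by
  rw [norm_iteratedFDeriv_eq_norm_iteratedDeriv, iteratedDeriv_eq_iterate, iter_deriv_inv,
    show (-1 - i : ℤ) = -((i + 1 : ℕ) : ℤ) by push_cast; ring, zpow_neg, zpow_natCast]
  simp [inv_pow]

lemma exists_bound_norm_iteratedFDeriv_smoothTransition (i : ℕ) :
    ∃ B, ∀ y, ‖iteratedFDeriv ℝ i Real.smoothTransition y‖ ≤ B := by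
  cases i with
  | zero =>
    refine ⟨1, fun y => ?_⟩
    rw [norm_iteratedFDeriv_zero, Real.norm_eq_abs,
      abs_of_nonneg (Real.smoothTransition.nonneg y)]
    exact Real.smoothTransition.le_one y
  | succ i =>
    -- `smoothTransition` is constant off `[0, 1]`, so its derivative has compact support
    have hsupp : HasCompactSupport (deriv Real.smoothTransition) := by
      refine HasCompactSupport.intro (isCompact_Icc (a := (0 : ℝ)) (b := 1)) fun y hy => ?_
      rcases not_and_or.1 hy with hy | hy
      · have : Real.smoothTransition =ᶠ[𝓝 y] fun _ => 0 :=
          eventually_of_mem (Iio_mem_nhds (not_le.1 hy)) fun _ hz =>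
            Real.smoothTransition.zero_of_nonpos hz.le
        rw [this.deriv_eq, deriv_const]
      · have : Real.smoothTransition =ᶠ[𝓝 y] fun _ => 1 :=
          eventually_of_mem (Ioi_mem_nhds (not_le.1 hy)) fun _ hz =>
            Real.smoothTransition.one_of_one_le hz.le
        rw [this.deriv_eq, deriv_const]
    obtain ⟨B, hB⟩ := ((Real.smoothTransition.contDiff.iterate_deriv 1).continuous_iteratedFDeriv
      (mod_cast le_top)).bounded_above_of_compact_support (hsupp.iteratedFDeriv i)
    refine ⟨B, fun y => ?_⟩
    rw [norm_iteratedFDeriv_eq_norm_iteratedDeriv, iteratedDeriv_succ',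
      ← norm_iteratedFDeriv_eq_norm_iteratedDeriv]
    exact hB y

lemma exists_gap {ι : Type*} [Fintype ι] (a : ι → ℝ) {i₀ j₀ : ι} (h₀ : a i₀ = 0)
    (hpos : 0 < a j₀) :
    ∃ c, a i₀ < c ∧ c ≤ a j₀ ∧
      ∀ i j, a i < c → c ≤ a j → a j₀ / Fintype.card ι ≤ a j - a i := by
  classical
  set t := a j₀
  set N := Fintype.card ι
  have hN : (0 : ℝ) < N := Nat.cast_pos.2 (Fintype.card_pos_iff.2 ⟨i₀⟩)
  -- pigeonhole: the `N` values `⌊N a_i / t⌋₊` miss some `k ∈ {0, …, N}`, and `k ≠ 0` as `a i₀ = 0`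
  set b : ι → ℕ := fun i => ⌊a i * N / t⌋₊
  obtain ⟨k, hk, hkb⟩ : ∃ k ∈ Finset.range (N + 1), k ∉ Finset.univ.image b := by
    refine Finset.exists_mem_notMem_of_card_lt_card ?_
    rw [Finset.card_range]
    exact Nat.lt_succ_of_le (Finset.card_image_le.trans_eq Finset.card_univ)
  have hbk : ∀ i, b i ≠ k := fun i h => hkb (h ▸ Finset.mem_image_of_mem b (Finset.mem_univ i))
  have hk₀ : k ≠ 0 := fun h => hbk i₀ (by simp [b, h₀, h])
  have hkN : (k : ℝ) ≤ N := by exact_mod_cast Nat.lt_succ_iff.1 (Finset.mem_range.1 hk)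
  refine ⟨k * t / N, by rw [h₀]; positivity, (div_le_iff₀ hN).2 (by nlinarith),
    fun i j hi hj => ?_⟩
  have hj' : ((k + 1 : ℕ) : ℝ) * t ≤ a j * N := by
    rw [← le_div_iff₀ hpos]
    refine (Nat.le_floor_iff' k.succ_ne_zero).1
      (Nat.succ_le_of_lt (lt_of_le_of_ne ((Nat.le_floor_iff' hk₀).2 ?_) (hbk j).symm))
    rw [le_div_iff₀ hpos, ← div_le_iff₀ hN]
    exact hj
  calc t / N = (k + 1 : ℕ) * t / N - k * t / N := by push_cast; ring
    _ ≤ a j - a i := sub_le_sub ((div_le_iff₀ hN).2 hj') hi.le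

lemma closure_support_inter_subset {X : Type*} [TopologicalSpace X] {U : Set X} (hU : IsOpen U)
    {χ r : X → ℝ} (hr : ContinuousOn r U) {a : ℝ} (h : ∀ x, χ x ≠ 0 → a < r x) :
    closure (Function.support χ) ∩ U ⊆ {x | a ≤ r x} := by
  rintro y ⟨hy, hyU⟩
  show a ≤ r y
  by_contra! hya
  obtain ⟨z, ⟨-, hz⟩, hzχ⟩ :=
    _root_.mem_closure_iff.1 hy _ (hr.isOpen_inter_preimage hU isOpen_Iio) ⟨hyU, hya⟩
  exact (h z hzχ).not_gt hz

section Moderate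

variable {E F G : Type*} [NormedAddCommGroup E] [NormedSpace ℝ E] [NormedAddCommGroup F]
  [NormedSpace ℝ F] [NormedAddCommGroup G] [NormedSpace ℝ G]
  {w : E → ℝ} {U K : Set E}

def ModerateOn (w : E → ℝ) (U : Set E) (f : E → F) : Prop :=
  ContDiffOn ℝ ∞ f U ∧ ∀ (j : ℕ) (K : Set E), IsCompact K →
    ∃ (C : ℝ) (s : ℕ), ∀ x ∈ K ∩ U, ‖iteratedFDerivWithin ℝ j f U x‖ ≤ C * w x ^ s

namespace ModerateOn

lemma exists_bound_forall_le {f : E → F} (hw : ∀ x, 1 ≤ w x) (hf : ModerateOn w U f) (k : ℕ)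
    (hK : IsCompact K) : ∃ (C : ℝ) (s : ℕ), 0 ≤ C ∧
      ∀ x ∈ K ∩ U, ∀ j ≤ k, ‖iteratedFDerivWithin ℝ j f U x‖ ≤ C * w x ^ s :=
  exists_bound_forall_le_of_forall hw (fun j => hf.2 j K hK) k

lemma of_contDiff {f : E → F} (hU : IsOpen U) (hf : ContDiff ℝ ∞ f) : ModerateOn w U f := by
  refine ⟨hf.contDiffOn, fun j K hK => ?_⟩
  obtain ⟨C, hC⟩ := hK.exists_bound_of_continuousOn
    (hf.continuous_iteratedFDeriv (mod_cast le_top)).continuousOn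
  refine ⟨C, 0, fun x hx => ?_⟩
  rw [iteratedFDerivWithin_of_isOpen j hU hx.2, pow_zero, mul_one]
  exact hC x hx.1

lemma const (hU : IsOpen U) (c : F) : ModerateOn w U (fun _ => c) :=
  of_contDiff hU contDiff_const

lemma add {f g : E → F} (hw : ∀ x, 1 ≤ w x) (hU : UniqueDiffOn ℝ U) (hf : ModerateOn w U f)
    (hg : ModerateOn w U g) : ModerateOn w U (fun x => f x + g x) := by
  refine ⟨hf.1.add hg.1, fun j K hK => ?_⟩
  obtain ⟨C₁, s₁, h₁⟩ := hf.2 j K hK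
  obtain ⟨C₂, s₂, h₂⟩ := hg.2 j K hK
  refine ⟨|C₁| + |C₂|, s₁ + s₂, fun x hx => ?_⟩
  rw [fun_iteratedFDerivWithin_add_apply (hf.1.of_le (mod_cast le_top) x hx.2)
    (hg.1.of_le (mod_cast le_top) x hx.2) hU hx.2, add_mul]
  exact (norm_add_le _ _).trans (add_le_add
    (le_abs_mul_pow_of_le (h₁ x hx) (hw x) (Nat.le_add_right _ _))
    (le_abs_mul_pow_of_le (h₂ x hx) (hw x) (Nat.le_add_left _ _)))

lemma sum {ι : Type*} (s : Finset ι) {f : ι → E → F} (hw : ∀ x, 1 ≤ w x) (hU : IsOpen U)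
    (hf : ∀ i ∈ s, ModerateOn w U (f i)) : ModerateOn w U (fun x => ∑ i ∈ s, f i x) := by
  classical
  induction s using Finset.induction_on with
  | empty => simpa using const (w := w) hU (0 : F)
  | insert i s hi ih =>
    simp only [Finset.sum_insert hi]
    exact add hw hU.uniqueDiffOn (hf i (Finset.mem_insert_self i s))
      (ih fun j hj => hf j (Finset.mem_insert_of_mem hj))

lemma mul {A : Type*} [NormedRing A] [NormedAlgebra ℝ A] {f g : E → A} (hw : ∀ x, 1 ≤ w x)
    (hU : UniqueDiffOn ℝ U) (hf : ModerateOn w U f) (hg : ModerateOn w U g) : ModerateOn w U (fun x => f x * g x) := by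
  refine ⟨hf.1.mul hg.1, fun j K hK => ?_⟩
  obtain ⟨C₁, s₁, hC₁, h₁⟩ := hf.exists_bound_forall_le hw j hK
  obtain ⟨C₂, s₂, hC₂, h₂⟩ := hg.exists_bound_forall_le hw j hK
  refine ⟨2 ^ j * C₁ * C₂, s₁ + s₂, fun x hx => ?_⟩
  have hwx : 0 ≤ w x := zero_le_one.trans (hw x)
  calc ‖iteratedFDerivWithin ℝ j (fun x => f x * g x) U x‖
      ≤ ∑ i ∈ Finset.range (j + 1), (j.choose i : ℝ) * ‖iteratedFDerivWithin ℝ i f U x‖ *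
          ‖iteratedFDerivWithin ℝ (j - i) g U x‖ :=
        norm_iteratedFDerivWithin_mul_le hf.1 hg.1 hU hx.2 (mod_cast le_top)
    _ ≤ ∑ i ∈ Finset.range (j + 1), (j.choose i : ℝ) * (C₁ * w x ^ s₁) * (C₂ * w x ^ s₂) := by
        gcongr with i hi
        · exact h₁ x hx _ (Nat.le_of_lt_succ (Finset.mem_range.1 hi))
        · exact h₂ x hx _ (Nat.sub_le j i)
    _ = 2 ^ j * C₁ * C₂ * w x ^ (s₁ + s₂) := by
        rw [← Finset.sum_mul, ← Finset.sum_mul, ← Nat.cast_sum, Nat.sum_range_choose]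
        push_cast
        ring

lemma prod {ι A : Type*} [NormedCommRing A] [NormedAlgebra ℝ A] (s : Finset ι) {f : ι → E → A}
    (hw : ∀ x, 1 ≤ w x) (hU : IsOpen U) (hf : ∀ i ∈ s, ModerateOn w U (f i)) :
    ModerateOn w U (fun x => ∏ i ∈ s, f i x) := by
  classical
  induction s using Finset.induction_on with
  | empty => simpa using const (w := w) hU (1 : A)
  | insert i s hi ih =>
    simp only [Finset.prod_insert hi]
    exact mul hw hU.uniqueDiffOn (hf i (Finset.mem_insert_self i s))
      (ih fun j hj => hf j (Finset.mem_insert_of_mem hj))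

lemma comp {f : E → F} {g : F → G} {t : Set F} (hw : ∀ x, 1 ≤ w x) (hU : UniqueDiffOn ℝ U)
    (ht : UniqueDiffOn ℝ t) (hg : ContDiffOn ℝ ∞ g t) (hf : ModerateOn w U f) (hft : MapsTo f U t)
    (hgw : ∀ i, ∃ (B : ℝ) (r : ℕ), ∀ x ∈ U, ‖iteratedFDerivWithin ℝ i g t (f x)‖ ≤ B * w x ^ r) :
    ModerateOn w U (g ∘ f) := by
  refine ⟨hg.comp hf.1 hft, fun j K hK => ?_⟩
  obtain ⟨C, s, hC, hfC⟩ := hf.exists_bound_forall_le hw j hK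
  obtain ⟨B, r, -, hgB⟩ := exists_bound_forall_le_of_forall hw hgw j
  refine ⟨j ! * B * (1 + C) ^ j, r + s * j, fun x hx => ?_⟩
  have hws : 1 ≤ w x ^ s := one_le_pow₀ (hw x)
  -- Faà di Bruno, with every derivative of `f` of order `≤ j` bounded by `(1 + C) * w x ^ s`
  have key := norm_iteratedFDerivWithin_comp_le hg hf.1 (mod_cast le_top) ht hU hft
    hx.2 (C := B * w x ^ r) (D := (1 + C) * w x ^ s) (fun i hi => hgB x hx.2 i hi)
    fun i hi hij => (hfC x hx i hij).trans <| by
      calc C * w x ^ s ≤ (1 + C) * w x ^ s := by nlinarith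
        _ ≤ ((1 + C) * w x ^ s) ^ i := le_self_pow₀ (by nlinarith) (by omega)
  calc _ ≤ j ! * (B * w x ^ r) * ((1 + C) * w x ^ s) ^ j := key
    _ = j ! * B * (1 + C) ^ j * w x ^ (r + s * j) := by rw [mul_pow, pow_add, pow_mul]; ring

lemma inv {f : E → ℝ} (hw : ∀ x, 1 ≤ w x) (hU : UniqueDiffOn ℝ U) (hf : ModerateOn w U f)
    (hf₀ : ∀ x ∈ U, f x ≠ 0) {a : ℕ} (hfw : ∀ x ∈ U, |f x|⁻¹ ≤ w x ^ a) :
    ModerateOn w U (fun x => (f x)⁻¹) :=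
  hf.comp hw hU isOpen_compl_singleton.uniqueDiffOn (contDiffOn_inv ℝ) hf₀ fun i =>
    ⟨i !, a * (i + 1), fun x hx => by
      rw [iteratedFDerivWithin_of_isOpen i isOpen_compl_singleton (hf₀ x hx),
        norm_iteratedFDeriv_inv, pow_mul]
      gcongr
      exact hfw x hx⟩

lemma smoothTransition {f : E → ℝ} (hw : ∀ x, 1 ≤ w x) (hU : UniqueDiffOn ℝ U)
    (hf : ModerateOn w U f) : ModerateOn w U (fun x => Real.smoothTransition (f x)) :=
  hf.comp hw hU uniqueDiffOn_univ Real.smoothTransition.contDiff.contDiffOn (mapsTo_univ _ _)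
    fun i => by
      obtain ⟨B, hB⟩ := exists_bound_norm_iteratedFDeriv_smoothTransition i
      exact ⟨B, 0, fun x _ => by simpa [iteratedFDerivWithin_univ] using hB (f x)⟩

end ModerateOn

end Moderate

lemma ModerateOn.temperedAlong {V : Type*} [NormedAddCommGroup V] [NormedSpace ℝ V] {X : Set V}
    (hX : IsClosed X) {f : V → ℝ} (hf : ModerateOn (fun x => 1 + (infDist x X)⁻¹) Xᶜ f) :
    TemperedAlong X (fun x => (f x : ℂ)) := by
  refine ⟨Complex.ofRealCLM.contDiff.comp_contDiffOn hf.1, fun k K hK => ?_⟩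
  have hw : ∀ x, 1 ≤ 1 + (infDist x X)⁻¹ :=
    fun x => le_add_of_nonneg_right (inv_nonneg.2 infDist_nonneg)
  obtain ⟨C, s, hC, hb⟩ := hf.exists_bound_forall_le hw k hK
  refine ⟨(C + 1) * 2 ^ s, (s + 1 : ℕ), mul_pos (by linarith) (by positivity), by positivity,
    fun x hx j hj => ?_⟩
  have hnorm : ‖iteratedFDeriv ℝ j (fun x => (f x : ℂ)) x‖ =
      ‖iteratedFDerivWithin ℝ j f Xᶜ x‖ := by
    rw [← iteratedFDerivWithin_of_isOpen j hX.isOpen_compl hx.2]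
    exact Complex.ofRealLI.norm_iteratedFDerivWithin_comp_left (hf.1 x hx.2)
      hX.isOpen_compl.uniqueDiffOn hx.2 (mod_cast le_top)
  have hr : 0 ≤ (infDist x X)⁻¹ := inv_nonneg.2 infDist_nonneg
  calc ‖iteratedFDeriv ℝ j (fun x => (f x : ℂ)) x‖
      = ‖iteratedFDerivWithin ℝ j f Xᶜ x‖ := hnorm
    _ ≤ C * (1 + (infDist x X)⁻¹) ^ s := hb x hx j hj
    _ ≤ C * (1 + (infDist x X)⁻¹) ^ (s + 1) := by gcongr; exacts [hw x, s.le_succ]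
    _ ≤ C * (2 ^ s * (1 ^ (s + 1) + (infDist x X)⁻¹ ^ (s + 1))) := by
        gcongr
        exact add_pow_le zero_le_one hr (s + 1)
    _ ≤ (C + 1) * 2 ^ s * (1 + (infDist x X)⁻¹ ^ (s + 1)) := by
        rw [one_pow, mul_assoc (C + 1)]
        gcongr
        linarith
    _ = (C + 1) * 2 ^ s * (1 + infDist x X ^ (-((s + 1 : ℕ) : ℝ))) := by
        rw [Real.rpow_neg infDist_nonneg, Real.rpow_natCast, inv_pow]

lemma isNontrivPart_filter (P : Fin n → Prop) [DecidablePred P] {i j : Fin n} (hi : P i)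
    (hj : ¬ P j) : IsNontrivPart (Finset.univ.filter P, Finset.univ.filter (¬ P ·)) :=
  ⟨⟨i, by simpa using hi⟩, ⟨j, by simpa using hj⟩, Finset.disjoint_filter_filter_not _ _ _,
    Finset.filter_union_filter_not_eq _ _⟩

lemma isClosed_smallDiag : IsClosed (smallDiag d n) := by
  simp only [smallDiag, ofPred_forall]
  exact isClosed_iInter fun i => isClosed_iInter fun j =>
    isClosed_eq (continuous_apply i) (continuous_apply j)

lemma isOpen_compl_smallDiag : IsOpen (smallDiag d n)ᶜ := isClosed_smallDiag.isOpen_compl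

lemma exists_ne_of_notMem_smallDiag {x : Conf d n} (hx : x ∉ smallDiag d n) :
    ∃ i j, x i ≠ x j := by
  simpa [smallDiag] using hx

lemma infDist_smallDiag_pos {x : Conf d n} (hx : x ∉ smallDiag d n) :
    0 < infDist x (smallDiag d n) :=
  (isClosed_smallDiag.notMem_iff_infDist_pos ⟨fun _ => 0, fun _ _ => rfl⟩).1 hx

def diagWeight (x : Conf d n) : ℝ := 1 + (infDist x (smallDiag d n))⁻¹

lemma one_le_diagWeight (x : Conf d n) : 1 ≤ diagWeight x :=
  le_add_of_nonneg_right (inv_nonneg.2 infDist_nonneg)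

def sumSqDist (x : Conf d n) : ℝ := ∑ i, ∑ j, ‖x i - x j‖ ^ 2

lemma contDiff_sq_norm_sub (i j : Fin n) : ContDiff ℝ ∞ fun x : Conf d n => ‖x i - x j‖ ^ 2 :=
  ((contDiff_apply ℝ (Euc d) i).sub (contDiff_apply ℝ (Euc d) j)).norm_sq ℝ

lemma contDiff_sumSqDist : ContDiff ℝ ∞ (sumSqDist (d := d) (n := n)) :=
  ContDiff.sum fun i _ => ContDiff.sum fun j _ => contDiff_sq_norm_sub i j

lemma sq_norm_sub_le_sumSqDist (x : Conf d n) (i j : Fin n) : ‖x i - x j‖ ^ 2 ≤ sumSqDist x :=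
  (Finset.single_le_sum (f := fun j => ‖x i - x j‖ ^ 2) (fun _ _ => by positivity)
    (Finset.mem_univ j)).trans <|
  Finset.single_le_sum (f := fun i => ∑ j, ‖x i - x j‖ ^ 2)
    (fun _ _ => Finset.sum_nonneg fun _ _ => by positivity) (Finset.mem_univ i)

lemma sumSqDist_le {x : Conf d n} {t : ℝ} (ht : ∀ i j, ‖x i - x j‖ ≤ t) :
    sumSqDist x ≤ n ^ 2 * t ^ 2 := by
  calc sumSqDist x ≤ ∑ _i : Fin n, ∑ _j : Fin n, t ^ 2 :=
        Finset.sum_le_sum fun i _ => Finset.sum_le_sum fun j _ =>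
          pow_le_pow_left₀ (norm_nonneg _) (ht i j) 2
    _ = n ^ 2 * t ^ 2 := by simp; ring

lemma sq_infDist_le_sumSqDist (x : Conf d n) : infDist x (smallDiag d n) ^ 2 ≤ sumSqDist x := by
  rcases isEmpty_or_nonempty (Fin n) with _ | ⟨⟨i₀⟩⟩
  · have hx : x ∈ smallDiag d n := fun i => isEmptyElim i
    simp [infDist_zero_of_mem hx, sumSqDist]
  · have hD : 0 ≤ sumSqDist x := (sq_nonneg _).trans (sq_norm_sub_le_sumSqDist x i₀ i₀)
    have h : infDist x (smallDiag d n) ≤ √(sumSqDist x) :=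
      (infDist_le_dist_of_mem (s := smallDiag d n) (y := fun _ => x i₀) fun _ _ => rfl).trans <|
        (dist_pi_le_iff (Real.sqrt_nonneg _)).2 fun i =>
          Real.le_sqrt_of_sq_le (by simpa [dist_eq_norm] using sq_norm_sub_le_sumSqDist x i i₀)
    calc infDist x (smallDiag d n) ^ 2 ≤ √(sumSqDist x) ^ 2 := by gcongr; exact infDist_nonneg
      _ = sumSqDist x := Real.sq_sqrt hD

lemma sumSqDist_pos {x : Conf d n} (hx : x ∉ smallDiag d n) : 0 < sumSqDist x :=
  (pow_pos (infDist_smallDiag_pos hx) 2).trans_le (sq_infDist_le_sumSqDist x)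

lemma inv_sumSqDist_le_sq_diagWeight {x : Conf d n} (hx : x ∉ smallDiag d n) :
    (sumSqDist x)⁻¹ ≤ diagWeight x ^ 2 := by
  have hr := infDist_smallDiag_pos hx
  calc (sumSqDist x)⁻¹ ≤ (infDist x (smallDiag d n) ^ 2)⁻¹ :=
        inv_anti₀ (by positivity) (sq_infDist_le_sumSqDist x)
    _ ≤ diagWeight x ^ 2 := by
        rw [← inv_pow, diagWeight]
        gcongr
        linarith

-- The factor `n ^ 4` makes every factor `≥ 1` for the partition of `exists_one_le_separation`.
def separation (p : Finset (Fin n) × Finset (Fin n)) (x : Conf d n) : ℝ :=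
  ∏ i ∈ p.1, ∏ j ∈ p.2, (n : ℝ) ^ 4 * ‖x i - x j‖ ^ 2 / sumSqDist x

lemma mem_cpart_of_separation_ne_zero {p : Finset (Fin n) × Finset (Fin n)} {x : Conf d n}
    (h : separation p x ≠ 0) : x ∈ Cpart p := fun i hi j hj hij =>
  h (Finset.prod_eq_zero hi (Finset.prod_eq_zero hj (by simp [hij])))

lemma exists_one_le_separation {x : Conf d n} (hx : x ∉ smallDiag d n) :
    ∃ p, IsNontrivPart p ∧ 1 ≤ separation p x := by
  classical
  obtain ⟨i₁, j₁, h₁⟩ := exists_ne_of_notMem_smallDiag hx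
  obtain ⟨⟨i₀, j₀⟩, -, hmax⟩ := Finset.univ.exists_max_image
    (fun ij : Fin n × Fin n => ‖x ij.1 - x ij.2‖) ⟨(i₁, j₁), Finset.mem_univ _⟩
  set a : Fin n → ℝ := fun i => ‖x i - x i₀‖
  have hle : ∀ i j, ‖x i - x j‖ ≤ a j₀ := fun i j => by
    simpa [a, norm_sub_rev] using hmax (i, j) (Finset.mem_univ _)
  have hpos : 0 < a j₀ := (norm_pos_iff.2 (sub_ne_zero.2 h₁)).trans_le (hle i₁ j₁)
  obtain ⟨c, hi₀, hj₀, hgap⟩ := exists_gap a (i₀ := i₀) (by simp [a]) hpos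
  refine ⟨_, isNontrivPart_filter (a · < c) hi₀ (not_lt.2 hj₀), ?_⟩
  refine Finset.one_le_prod fun i hi => Finset.one_le_prod fun j hj => ?_
  simp only [Finset.mem_filter, Finset.mem_univ, true_and, not_lt] at hi hj
  have hn : (n : ℝ) ≠ 0 := Nat.cast_ne_zero.2 (Fin.pos i).ne'
  have hij : a j₀ / n ≤ ‖x i - x j‖ := by
    refine (Fintype.card_fin n ▸ hgap i j hi hj).trans ?_
    calc a j - a i ≤ ‖(x j - x i₀) - (x i - x i₀)‖ := norm_sub_norm_le _ _
      _ = ‖x i - x j‖ := by rw [sub_sub_sub_cancel_right, norm_sub_rev]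
  rw [one_le_div (sumSqDist_pos hx)]
  calc sumSqDist x ≤ n ^ 2 * a j₀ ^ 2 := sumSqDist_le hle
    _ = n ^ 4 * (a j₀ / n) ^ 2 := by field_simp
    _ ≤ n ^ 4 * ‖x i - x j‖ ^ 2 := by gcongr

lemma iUnion_cpart_eq_compl_smallDiag :
    (⋃ p ∈ {p : Finset (Fin n) × Finset (Fin n) | IsNontrivPart p}, Cpart (d := d) p) =
      (smallDiag d n)ᶜ := by
  ext x
  simp only [mem_iUnion, mem_ofPred_eq, exists_prop, mem_compl_iff]
  constructor
  · rintro ⟨p, ⟨⟨i, hi⟩, ⟨j, hj⟩, -⟩, hx⟩ hdiag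
    exact hx i hi j hj (hdiag i j)
  · intro hx
    obtain ⟨p, hp, hsep⟩ := exists_one_le_separation hx
    exact ⟨p, hp, mem_cpart_of_separation_ne_zero (by positivity)⟩

open Classical in
def cutoff (p : Finset (Fin n) × Finset (Fin n)) (x : Conf d n) : ℝ :=
  if IsNontrivPart p then Real.smoothTransition (2 * separation p x - 1) else 0

lemma cutoff_nonneg (p : Finset (Fin n) × Finset (Fin n)) (x : Conf d n) : 0 ≤ cutoff p x := by
  unfold cutoff
  split_ifs
  exacts [Real.smoothTransition.nonneg _, le_rfl]

lemma half_lt_separation_of_cutoff_ne_zero {p : Finset (Fin n) × Finset (Fin n)} {x : Conf d n}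
    (h : cutoff p x ≠ 0) : 1 / 2 < separation p x := by
  unfold cutoff at h
  split_ifs at h
  · have := Real.smoothTransition.zero_iff_nonpos.not.1 h
    linarith
  · exact absurd rfl h

lemma one_le_sum_cutoff {x : Conf d n} (hx : x ∉ smallDiag d n) : 1 ≤ ∑ q, cutoff q x := by
  obtain ⟨p, hp, hsep⟩ := exists_one_le_separation hx
  calc (1 : ℝ) = cutoff p x := by
        rw [cutoff, if_pos hp, Real.smoothTransition.one_of_one_le (by linarith)]
    _ ≤ ∑ q, cutoff q x :=
        Finset.single_le_sum (fun q _ => cutoff_nonneg q x) (Finset.mem_univ p)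

def chi (p : Finset (Fin n) × Finset (Fin n)) (x : Conf d n) : ℝ :=
  cutoff p x / ∑ q, cutoff q x

lemma sum_chi {x : Conf d n} (hx : x ∉ smallDiag d n) : ∑ p, chi p x = 1 := by
  simp only [chi]
  rw [← Finset.sum_div, div_self (zero_lt_one.trans_le (one_le_sum_cutoff hx)).ne']

lemma moderateOn_inv_sumSqDist :
    ModerateOn diagWeight (smallDiag d n)ᶜ (fun x => (sumSqDist x)⁻¹) :=
  (ModerateOn.of_contDiff isOpen_compl_smallDiag contDiff_sumSqDist).inv
    one_le_diagWeight isOpen_compl_smallDiag.uniqueDiffOn (fun x hx => (sumSqDist_pos hx).ne')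
    fun x hx => by rw [abs_of_pos (sumSqDist_pos hx)]; exact inv_sumSqDist_le_sq_diagWeight hx

lemma moderateOn_separation (p : Finset (Fin n) × Finset (Fin n)) :
    ModerateOn diagWeight (smallDiag d n)ᶜ (separation p) :=
  ModerateOn.prod _ one_le_diagWeight isOpen_compl_smallDiag fun i _ =>
    ModerateOn.prod _ one_le_diagWeight isOpen_compl_smallDiag fun j _ =>
      (ModerateOn.of_contDiff isOpen_compl_smallDiag
        (contDiff_const.mul (contDiff_sq_norm_sub i j))).mul one_le_diagWeight
        isOpen_compl_smallDiag.uniqueDiffOn moderateOn_inv_sumSqDist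

lemma moderateOn_cutoff (p : Finset (Fin n) × Finset (Fin n)) :
    ModerateOn diagWeight (smallDiag d n)ᶜ (cutoff p) := by
  by_cases hp : IsNontrivPart p
  · have h : ModerateOn diagWeight (smallDiag d n)ᶜ (fun x => 2 * separation p x + -1) :=
      ((ModerateOn.const isOpen_compl_smallDiag 2).mul one_le_diagWeight
      isOpen_compl_smallDiag.uniqueDiffOn (moderateOn_separation p)).add one_le_diagWeight
      isOpen_compl_smallDiag.uniqueDiffOn (ModerateOn.const isOpen_compl_smallDiag (-1))
    convert h.smoothTransition one_le_diagWeight isOpen_compl_smallDiag.uniqueDiffOn using 1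
    funext x
    rw [cutoff, if_pos hp, sub_eq_add_neg]
  · convert ModerateOn.const isOpen_compl_smallDiag (0 : ℝ) using 1
    funext x
    rw [cutoff, if_neg hp]

lemma moderateOn_chi (p : Finset (Fin n) × Finset (Fin n)) :
    ModerateOn diagWeight (smallDiag d n)ᶜ (chi p) :=
  (moderateOn_cutoff p).mul one_le_diagWeight isOpen_compl_smallDiag.uniqueDiffOn <|
    (ModerateOn.sum _ one_le_diagWeight isOpen_compl_smallDiag
      fun q _ => moderateOn_cutoff q).inv one_le_diagWeight isOpen_compl_smallDiag.uniqueDiffOn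
      (fun x hx => (zero_lt_one.trans_le (one_le_sum_cutoff hx)).ne') (a := 0) fun x hx => by
        rw [pow_zero, abs_of_pos (zero_lt_one.trans_le (one_le_sum_cutoff hx))]
        exact inv_le_one_of_one_le₀ (one_le_sum_cutoff hx)

lemma chi_nonneg (p : Finset (Fin n) × Finset (Fin n)) (x : Conf d n) : 0 ≤ chi p x :=
  div_nonneg (cutoff_nonneg p x) (Finset.sum_nonneg fun q _ => cutoff_nonneg q x)

lemma chi_of_not_isNontrivPart {p : Finset (Fin n) × Finset (Fin n)} (hp : ¬ IsNontrivPart p) :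
    chi (d := d) p = 0 := by
  funext x
  simp [chi, cutoff, hp]

lemma closure_support_chi_inter_subset (p : Finset (Fin n) × Finset (Fin n)) :
    closure (Function.support (chi p)) ∩ (smallDiag d n)ᶜ ⊆ Cpart p := by
  refine (closure_support_inter_subset isOpen_compl_smallDiag
    (moderateOn_separation p).1.continuousOn fun x hx => ?_).trans fun x hx =>
      mem_cpart_of_separation_ne_zero (by linarith [show (1 / 2 : ℝ) ≤ separation p x from hx])
  exact half_lt_separation_of_cutoff_ne_zero fun h => hx (by simp [chi, h])

theorem statement_15_general {d n : ℕ} :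
    -- the `C_{I₁I₂}` cover `M^n \ d_n`
    (⋃ p ∈ {p : Finset (Fin n) × Finset (Fin n) | IsNontrivPart p}, Cpart (d := d) p) =
      (smallDiag d n)ᶜ ∧
    -- a subordinated partition of unity, tempered along `d_n`
    ∃ χ : Finset (Fin n) × Finset (Fin n) → Conf d n → ℝ,
      (∀ p, ¬ IsNontrivPart p → χ p = 0) ∧
      -- nonnegative
      (∀ p x, 0 ≤ χ p x) ∧
      -- smooth on `M^n \ d_n` and tempered along `d_n`
      (∀ p, IsNontrivPart p →
        TemperedAlong (smallDiag d n) (fun x => (χ p x : ℂ))) ∧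
      -- supported (relatively to `M^n \ d_n`) in `C_{I₁I₂}`
      (∀ p, IsNontrivPart p →
        closure (Function.support (χ p)) ∩ (smallDiag d n)ᶜ ⊆ Cpart p) ∧
      -- summing to one on `M^n \ d_n`
      (∀ x : Conf d n, x ∉ smallDiag d n →
        ∑ p : Finset (Fin n) × Finset (Fin n), χ p x = 1) := by
  exact ⟨iUnion_cpart_eq_compl_smallDiag, chi, fun p => chi_of_not_isNontrivPart, chi_nonneg,
    fun p _ => (moderateOn_chi p).temperedAlong isClosed_smallDiag,
    fun p _ => closure_support_chi_inter_subset p, fun x => sum_chi⟩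

/-- Cover of `M^n \ d_n` and a subordinated tempered partition of
unity.  The sets `C_{I₁I₂}`, for `(I₁,I₂)` running over the nontrivial partitions of
`{1,…,n}`, cover `M^n \ d_n`, and there is a subordinated partition of unity
`{χ_{I₁I₂}}` all of whose members are tempered along the small diagonal `d_n`. -/
theorem statement_15 {d n : ℕ} (hn : 2 ≤ n) :
    -- the `C_{I₁I₂}` cover `M^n \ d_n`
    (⋃ p ∈ {p : Finset (Fin n) × Finset (Fin n) | IsNontrivPart p}, Cpart (d := d) p) =
      (smallDiag d n)ᶜ ∧
    -- a subordinated partition of unity, tempered along `d_n`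
    ∃ χ : Finset (Fin n) × Finset (Fin n) → Conf d n → ℝ,
      (∀ p, ¬ IsNontrivPart p → χ p = 0) ∧
      -- nonnegative
      (∀ p x, 0 ≤ χ p x) ∧
      -- smooth on `M^n \ d_n` and tempered along `d_n`
      (∀ p, IsNontrivPart p →
        TemperedAlong (smallDiag d n) (fun x => (χ p x : ℂ))) ∧
      -- supported (relatively to `M^n \ d_n`) in `C_{I₁I₂}`
      (∀ p, IsNontrivPart p →
        closure (Function.support (χ p)) ∩ (smallDiag d n)ᶜ ⊆ Cpart p) ∧
      -- summing to one on `M^n \ d_n`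
      (∀ x : Conf d n, x ∉ smallDiag d n →
        ∑ p : Finset (Fin n) × Finset (Fin n), χ p x = 1) :=
  statement_15_general

end
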